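/- arXiv:1708.02820 — 5 statements merged into one kernel-verified Lean document; each statement's English description precedes it below -/
import Mathlib

section
/- For all natural numbers n, m, ℓ with m < ℓ, the identity ∑_{k=0}^{m} C(m,k) · C(ℓ−k+n, n) = (1/n!) · (d^n/dx^n)[(x+1)^{ℓ+n−m} (x+2)^m]|_{x=0} holds, where the right-hand side is the n-th iterated derivative at 0 of the real function x ↦ (x+1)^{ℓ+n−m}(x+2)^m. (This is the formula χ_{m<ℓ}(n|m;ℓ) of Theorem 3.1, computing h^0(O_{P^{n|m}}(ℓ)) in the case m < ℓ.) -/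
/-!
Writing `x + 2 = (x + 1) + 1` and expanding binomially turns the function into
`∑ k, C(m,k) (x + 1)^(ℓ + n - m + k)`, and the `n`-th Taylor coefficient of `(x + 1)^N` at `0`
is `C(N, n)`. Reversing the summation index `k ↦ m - k` gives the left-hand side.
-/

open Finset

section

variable {𝕜 : Type*} [NontriviallyNormedField 𝕜]

theorem iteratedDeriv_add_one_pow_zero (N n : ℕ) :
    iteratedDeriv n (fun x : 𝕜 => (x + 1) ^ N) 0 = n.factorial * N.choose n := by
  simp only [iteratedDeriv_comp_add_const n (· ^ N) (1 : 𝕜), zero_add, iteratedDeriv_pow,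
    Nat.descFactorial_eq_factorial_mul_choose, one_pow, mul_one, Nat.cast_mul]

theorem add_one_pow_mul_add_two_pow (x : 𝕜) (a m : ℕ) :
    (x + 1) ^ a * (x + 2) ^ m = ∑ k ∈ range (m + 1), (m.choose k : 𝕜) * (x + 1) ^ (a + k) := by
  rw [show x + 2 = (x + 1) + 1 by ring, add_pow (x + 1) 1 m, mul_sum]
  refine sum_congr rfl fun k _ => ?_
  rw [one_pow, mul_one, pow_add]
  ring

theorem iteratedDeriv_add_one_pow_mul_add_two_pow_zero (n a m : ℕ) :
    iteratedDeriv n (fun x : 𝕜 => (x + 1) ^ a * (x + 2) ^ m) 0 =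
      n.factorial * ∑ k ∈ range (m + 1), (m.choose k * (a + k).choose n : ℕ) := by
  simp_rw [add_one_pow_mul_add_two_pow]
  rw [iteratedDeriv_fun_sum fun k _ => by fun_prop, Nat.cast_sum, mul_sum]
  refine sum_congr rfl fun k _ => ?_
  rw [iteratedDeriv_const_mul_field, iteratedDeriv_add_one_pow_zero]
  push_cast
  ring

end

theorem Nat.sum_range_choose_mul_choose_sub_add {m ℓ : ℕ} (h : m ≤ ℓ) (n : ℕ) :
    ∑ k ∈ range (m + 1), m.choose k * (ℓ - k + n).choose n =
      ∑ k ∈ range (m + 1), m.choose k * (ℓ + n - m + k).choose n := by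
  rw [← sum_range_reflect]
  refine sum_congr rfl fun k hk => ?_
  have hk : k ≤ m := Nat.lt_succ_iff.mp (mem_range.mp hk)
  rw [add_tsub_cancel_right, Nat.choose_symm hk]
  congr 2
  omega

theorem stmt_0 (n m ℓ : ℕ) (h : m < ℓ) :
    ((∑ k ∈ Finset.range (m + 1), m.choose k * (ℓ - k + n).choose n : ℕ) : ℝ) =
      (1 / (n.factorial : ℝ)) *
        iteratedDeriv n (fun x : ℝ => (x + 1) ^ (ℓ + n - m) * (x + 2) ^ m) 0 := by
  rw [iteratedDeriv_add_one_pow_mul_add_two_pow_zero, Nat.sum_range_choose_mul_choose_sub_add h.le,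
    ← mul_assoc, one_div_mul_cancel (by positivity), one_mul]
end

section
/- For all natural numbers n, m, ℓ, the identity ∑_{k=ℓ+1}^{m} C(m,k) · C(k−ℓ−1, n) = (1/n!) · (d^n/dx^n)[ ((x+2)^m − ∑_{k=0}^{ℓ} C(m,k)(x+1)^k) / (x+1)^{ℓ+1} ]|_{x=0} holds, where the right-hand side is the n-th iterated derivative at 0 of the real function x ↦ ((x+2)^m − ∑_{k=0}^{ℓ} C(m,k)(x+1)^k)/(x+1)^{ℓ+1} (which is smooth near x = 0 since the denominator equals 1 there). (This is the formula ζ_{ℓ+n+1>0}(n|m;ℓ) of Theorem 3.1, computing h^n(O_{P^{n|m}}(ℓ)) for ℓ ≥ 0; note that the coefficients in the subtracted sum are C(m,k).) -/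
/-!
Expanding `(x + 2) ^ m = ((x + 1) + 1) ^ m` binomially in powers of `x + 1`, the numerator is
`(x + 1) ^ (ℓ + 1) * ∑_{ℓ < k ≤ m} C(m, k) (x + 1) ^ (k - ℓ - 1)`. Near `0` the function is therefore
this polynomial, and the `n`-th derivative at `0` of `(x + 1) ^ j` is `j! / (j - n)! = n! C(j, n)`.
-/

open Finset Filter Topology

theorem add_one_pow_sub_sum_range {R : Type*} [CommRing R] (y : R) (m ℓ : ℕ) :
    (y + 1) ^ m - ∑ k ∈ range (ℓ + 1), (m.choose k : R) * y ^ k =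
      y ^ (ℓ + 1) * ∑ k ∈ Icc (ℓ + 1) m, (m.choose k : R) * y ^ (k - ℓ - 1) := by
  -- pad the binomial sum beyond both `m` and `ℓ`, so that it splits at `ℓ + 1` in every case
  have hexp : (y + 1) ^ m = ∑ k ∈ range (m + ℓ + 2), (m.choose k : R) * y ^ k := by
    rw [add_pow]
    refine sum_subset_zero_on_sdiff (range_subset_range.2 (by omega)) (fun k hk => ?_)
      fun k _ => by ring
    simp only [Finset.mem_sdiff, mem_range] at hk
    simp [Nat.choose_eq_zero_of_lt (by omega : m < k)]
  rw [hexp, ← sum_range_add_sum_Ico _ (by omega : ℓ + 1 ≤ m + ℓ + 2), add_sub_cancel_left,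
    mul_sum]
  symm
  refine sum_subset_zero_on_sdiff (fun k hk => ?_) ?_ fun k hk => ?_
  · simp only [mem_Icc, mem_Ico] at hk ⊢; omega
  · intro k hk
    simp only [Finset.mem_sdiff, mem_Icc, mem_Ico] at hk
    simp [Nat.choose_eq_zero_of_lt (by omega : m < k)]
  · rw [mem_Icc] at hk
    rw [mul_left_comm, ← pow_add, Nat.sub_sub, Nat.add_sub_cancel' hk.1]

variable {𝕜 : Type*} [NontriviallyNormedField 𝕜]

theorem iteratedDeriv_add_const_pow (n j : ℕ) (a x : 𝕜) :
    iteratedDeriv n (fun y => (y + a) ^ j) x = j.descFactorial n * (x + a) ^ (j - n) := by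
  rw [iteratedDeriv_comp_add_const n (· ^ j)]
  exact iteratedDeriv_pow j n

theorem iteratedDeriv_sum_mul_add_const_pow {ι : Type*} (n : ℕ) (s : Finset ι) (c : ι → 𝕜)
    (e : ι → ℕ) (a x : 𝕜) :
    iteratedDeriv n (fun y => ∑ i ∈ s, c i * (y + a) ^ e i) x =
      ∑ i ∈ s, c i * ((e i).descFactorial n * (x + a) ^ (e i - n)) := by
  rw [iteratedDeriv_fun_sum fun i _ => by fun_prop]
  simp only [iteratedDeriv_const_mul_field, iteratedDeriv_add_const_pow]

theorem stmt_3 (n m ℓ : ℕ) :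
    ((∑ k ∈ Finset.Icc (ℓ + 1) m, m.choose k * (k - ℓ - 1).choose n : ℕ) : ℝ) =
      (1 / (n.factorial : ℝ)) *
        iteratedDeriv n
          (fun x : ℝ =>
            ((x + 2) ^ m - ∑ k ∈ Finset.range (ℓ + 1), (m.choose k : ℝ) * (x + 1) ^ k) /
              (x + 1) ^ (ℓ + 1)) 0 := by
  have hpoly : (fun x : ℝ =>
      ((x + 2) ^ m - ∑ k ∈ range (ℓ + 1), (m.choose k : ℝ) * (x + 1) ^ k) / (x + 1) ^ (ℓ + 1))
        =ᶠ[𝓝 0] fun x => ∑ k ∈ Icc (ℓ + 1) m, (m.choose k : ℝ) * (x + 1) ^ (k - ℓ - 1) := by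
    filter_upwards [(continuous_add_const (1 : ℝ)).continuousAt.eventually_ne
      (by norm_num : (0 : ℝ) + 1 ≠ 0)] with x hx
    rw [show x + 2 = x + 1 + 1 by ring, add_one_pow_sub_sum_range,
      mul_div_cancel_left₀ _ (pow_ne_zero _ hx)]
  rw [hpoly.iteratedDeriv_eq, iteratedDeriv_sum_mul_add_const_pow, mul_sum]
  push_cast
  refine sum_congr rfl fun k _ => ?_
  rw [zero_add, one_pow, mul_one, Nat.descFactorial_eq_factorial_mul_choose, Nat.cast_mul]
  field_simp
end

section
/- For all natural numbers n, m, the identity ∑_{k=n+1}^{m} C(m,k) · C(k−1, n) = (1/n!) · (d^n/dx^n)[ ((x+2)^m − 1)/(x+1) ]|_{x=0} holds, where the right-hand side is the n-th iterated derivative at 0 of the real function x ↦ ((x+2)^m − 1)/(x+1). (This is the paper's closed formula for h^n(O_{P^{n|m}}), used in the even Picard group computation; it is the case ℓ = 0 of the formula ζ_{ℓ+n+1>0}.) -/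
/-!
With `y = x + 1`, the binomial theorem gives `((y + 1) ^ m - 1) / y = ∑_{k=1}^m C(m,k) y^(k-1)`,
a polynomial in `x` that agrees with the given function near `0`. Its `n`-th derivative at `0`
divided by `n!` is its `n`-th coefficient, and the coefficient of `x^n` in `(x + 1)^(k-1)`
is `C(k-1, n)`.
-/

open Polynomial Finset

section IteratedDeriv

variable {𝕜 : Type*} [NontriviallyNormedField 𝕜]

theorem Polynomial.iteratedDeriv_eval (p : 𝕜[X]) (n : ℕ) :
    iteratedDeriv n (fun x => p.eval x) = fun x => (derivative^[n] p).eval x := by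
  induction n with
  | zero => rfl
  | succ n ih =>
    rw [iteratedDeriv_succ, ih, Function.iterate_succ_apply']
    funext x
    exact Polynomial.deriv _

theorem Polynomial.iteratedDeriv_eval_zero (p : 𝕜[X]) (n : ℕ) :
    iteratedDeriv n (fun x => p.eval x) 0 = n.factorial * p.coeff n := by
  rw [Polynomial.iteratedDeriv_eval]
  beta_reduce
  rw [← coeff_zero_eq_eval_zero, coeff_iterate_derivative, zero_add, Nat.descFactorial_self,
    nsmul_eq_mul]

end IteratedDeriv

theorem add_one_pow_eq_mul_sum_add_one {R : Type*} [CommSemiring R] (y : R) (m : ℕ) :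
    (y + 1) ^ m = y * ∑ k ∈ Icc 1 m, (m.choose k : R) * y ^ (k - 1) + 1 := by
  rw [add_pow, sum_range_succ', mul_sum, ← Ico_add_one_right_eq_Icc, sum_Ico_eq_sum_range]
  simp only [one_pow, mul_one, pow_zero, Nat.choose_zero_right, Nat.cast_one,
    add_tsub_cancel_right, add_tsub_cancel_left]
  congr 1
  refine sum_congr rfl fun k _ => ?_
  rw [add_comm 1 k, pow_succ]
  ring

/-- `((X + 2) ^ m - 1) / (X + 1)`, expanded in powers of `X + 1`. -/
noncomputable def shiftedQuotient (R : Type*) [CommSemiring R] (m : ℕ) : R[X] :=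
  ∑ k ∈ Icc 1 m, (m.choose k : R[X]) * (X + 1) ^ (k - 1)

theorem coeff_shiftedQuotient (R : Type*) [CommSemiring R] (m n : ℕ) :
    (shiftedQuotient R m).coeff n =
      ((∑ k ∈ Icc (n + 1) m, m.choose k * (k - 1).choose n : ℕ) : R) := by
  have h_low_terms : ∀ k ∈ Icc 1 m, k ∉ Icc (n + 1) m → m.choose k * (k - 1).choose n = 0 :=
    fun k hk hk' => by
      rw [Nat.choose_eq_zero_of_lt (n := k - 1) (by grind), mul_zero]
  rw [sum_subset (Icc_subset_Icc_left n.succ_pos) h_low_terms, shiftedQuotient,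
    finsetSum_coeff]
  push_cast
  simp only [coeff_natCast_mul, coeff_X_add_one_pow]

theorem eval_shiftedQuotient {R : Type*} [Field R] (m : ℕ) {x : R} (hx : x + 1 ≠ 0) :
    (shiftedQuotient R m).eval x = ((x + 2) ^ m - 1) / (x + 1) := by
  rw [eq_div_iff hx, show x + 2 = (x + 1) + 1 by ring, add_one_pow_eq_mul_sum_add_one,
    shiftedQuotient]
  simp [eval_finsetSum, mul_comm]

theorem stmt_6 (n m : ℕ) :
    ((∑ k ∈ Finset.Icc (n + 1) m, m.choose k * (k - 1).choose n : ℕ) : ℝ) =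
      (1 / (n.factorial : ℝ)) *
        iteratedDeriv n (fun x : ℝ => ((x + 2) ^ m - 1) / (x + 1)) 0 := by
  have h_near_zero : (fun x : ℝ => ((x + 2) ^ m - 1) / (x + 1)) =ᶠ[nhds 0]
      fun x => (shiftedQuotient ℝ m).eval x := by
    filter_upwards [isOpen_ne.mem_nhds (by norm_num : (0 : ℝ) ≠ -1)] with x hx
    exact (eval_shiftedQuotient m (by contrapose! hx; linarith)).symm
  rw [h_near_zero.iteratedDeriv_eq, Polynomial.iteratedDeriv_eval_zero, coeff_shiftedQuotient]
  field_simp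
end

section
/- For all natural numbers n, m, the identity ∑_{k=n+2}^{m} C(m,k) · C(k−2, n) = (1/n!) · (d^n/dx^n)[ (x+2)^m/(x+1)^2 ]|_{x=0} − (−1)^n (m+n+1) holds, where the derivative term is the n-th iterated derivative at 0 of the real function x ↦ (x+2)^m/(x+1)^2. (This is the paper's closed formula for h^n(O_{P^{n|m}}(+1)^{⊕ n+1|m}) divided by the multiplicity n+m+1, used in the tangent-sheaf cohomology computation via the Euler sequence.) -/
/-!
With `y = x + 1` the binomial theorem gives `(x + 2)^m / (x + 1)^2 = ∑ⱼ C(m,j) y^(j-2)`, so the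
`n`-th Taylor coefficient at `x = 0` is `∑ⱼ C(m,j) · binom(j-2, n)` with generalized binomial
coefficients. For `j ≥ 2` these are the terms of the left-hand sum (zero unless `j ≥ n + 2`),
while `j = 0` and `j = 1` contribute `binom(-2, n) = (-1)^n (n+1)` and `m · binom(-1, n) = m (-1)^n`,
which make up the correction `(-1)^n (m + n + 1)`.
-/

open Finset Nat Filter Topology

theorem add_one_pow_div_sq_eq_sum_zpow {K : Type*} [Field K] (m : ℕ) {y : K} (hy : y ≠ 0) :
    (y + 1) ^ m / y ^ 2 = ∑ j ∈ range (m + 1), (m.choose j : K) * y ^ ((j : ℤ) - 2) := by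
  simp_rw [add_pow, one_pow, mul_one, sum_div, zpow_sub₀ hy, zpow_natCast]
  exact sum_congr rfl fun j _ => by field_simp

theorem contDiffAt_zpow {𝕜 : Type*} [NontriviallyNormedField 𝕜] {n : WithTop ℕ∞} (k : ℤ) {x : 𝕜}
    (hx : x ≠ 0) : ContDiffAt 𝕜 n (fun y => y ^ k) x := by
  obtain ⟨k, rfl | rfl⟩ := Int.eq_nat_or_neg k
  · simp only [zpow_natCast]
    fun_prop
  · simp only [zpow_neg, zpow_natCast]
    exact (contDiffAt_id.pow k).inv (pow_ne_zero k hx)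

theorem iteratedDeriv_add_const_zpow {𝕜 : Type*} [NontriviallyNormedField 𝕜] (k : ℤ) (n : ℕ)
    (c x : 𝕜) :
    iteratedDeriv n (fun y => (y + c) ^ k) x =
      (∏ i ∈ range n, ((k : 𝕜) - i)) * (x + c) ^ (k - n) := by
  rw [iteratedDeriv_comp_add_const (f := fun y => y ^ k), iteratedDeriv_eq_iterate]
  exact iter_deriv_zpow k (x + c) n

theorem prod_range_natCast_sub_eq_factorial_mul_choose {R : Type*} [CommRing R] (j n : ℕ) :
    ∏ i ∈ range n, ((j : R) - i) = n ! * j.choose n := by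
  rw [← descPochhammer_eval_eq_prod_range, descPochhammer_eval_eq_descFactorial,
    descFactorial_eq_factorial_mul_choose, Nat.cast_mul]

theorem prod_range_neg_natCast_sub_one_sub_eq_factorial_mul_choose {R : Type*} [CommRing R]
    (a n : ℕ) :
    ∏ i ∈ range n, (-(a : R) - 1 - i) = (-1) ^ n * n ! * (a + n).choose n := by
  have factor (i : ℕ) : -(a : R) - 1 - i = -1 * ((a + 1 + i : ℕ) : R) := by push_cast; ring
  simp_rw [factor, prod_mul_distrib, prod_const, card_range, ← Nat.cast_prod,
    ← ascFactorial_eq_prod_range, ascFactorial_eq_factorial_mul_choose, Nat.cast_mul, mul_assoc]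

theorem iteratedDeriv_add_two_pow_div_add_one_sq (m n : ℕ) :
    iteratedDeriv n (fun x : ℝ => (x + 2) ^ m / (x + 1) ^ 2) 0 =
      ∑ j ∈ range (m + 1), (m.choose j : ℝ) * ∏ i ∈ range n, ((j : ℝ) - 2 - i) := by
  have one_ne : (0 : ℝ) + 1 ≠ 0 := by norm_num
  have expansion : (fun x : ℝ => (x + 2) ^ m / (x + 1) ^ 2) =ᶠ[𝓝 0]
      fun x => ∑ j ∈ range (m + 1), (m.choose j : ℝ) * (x + 1) ^ ((j : ℤ) - 2) := by
    filter_upwards [(continuous_add_const (1 : ℝ)).continuousAt.eventually_ne one_ne] with x hx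
    rw [show x + 2 = (x + 1) + 1 by ring]
    exact add_one_pow_div_sq_eq_sum_zpow m hx
  have hsmooth (j : ℕ) :
      ContDiffAt ℝ n (fun x : ℝ => (m.choose j : ℝ) * (x + 1) ^ ((j : ℤ) - 2)) 0 :=
    contDiffAt_const.mul ((contDiffAt_zpow _ one_ne).comp 0 (contDiffAt_id.add contDiffAt_const))
  rw [expansion.iteratedDeriv_eq, iteratedDeriv_fun_sum fun j _ => hsmooth j]
  simp [iteratedDeriv_add_const_zpow]

theorem sum_Icc_choose_mul_choose_sub_two (m n : ℕ) :
    ∑ k ∈ Icc (n + 2) m, m.choose k * (k - 2).choose n =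
      ∑ k ∈ Ico 2 (m + 2), m.choose k * (k - 2).choose n := by
  refine sum_subset (fun k hk => ?_) fun k hk hk' => ?_
  · simp only [mem_Icc, mem_Ico] at hk ⊢
    omega
  · simp only [mem_Icc, mem_Ico, not_and_or, not_le] at hk hk'
    rcases hk' with hk' | hk'
    · rw [choose_eq_zero_of_lt (by omega : k - 2 < n), mul_zero]
    · rw [choose_eq_zero_of_lt hk', zero_mul]

theorem sum_choose_mul_prod_natCast_sub_two_sub (m n : ℕ) :
    ∑ j ∈ range (m + 1), (m.choose j : ℝ) * ∏ i ∈ range n, ((j : ℝ) - 2 - i) =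
      n ! * ((∑ k ∈ Icc (n + 2) m, m.choose k * (k - 2).choose n : ℕ) +
        (-1) ^ n * (m + n + 1)) := by
  have prod_at_zero : ∏ i ∈ range n, (((0 : ℕ) : ℝ) - 2 - i) = (-1) ^ n * n ! * (n + 1) := by
    have := prod_range_neg_natCast_sub_one_sub_eq_factorial_mul_choose (R := ℝ) 1 n
    rw [add_comm 1 n, choose_succ_self_right] at this
    push_cast at this
    rw [← this]
    exact prod_congr rfl fun i _ => by ring
  have prod_at_one : ∏ i ∈ range n, (((1 : ℕ) : ℝ) - 2 - i) = (-1) ^ n * n ! := by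
    have := prod_range_neg_natCast_sub_one_sub_eq_factorial_mul_choose (R := ℝ) 0 n
    rw [zero_add, choose_self, Nat.cast_one, mul_one] at this
    rw [← this]
    exact prod_congr rfl fun i _ => by ring
  have sum_from_two : ∑ j ∈ Ico 2 (m + 2), (m.choose j : ℝ) * ∏ i ∈ range n, ((j : ℝ) - 2 - i) =
      n ! * (∑ k ∈ Icc (n + 2) m, m.choose k * (k - 2).choose n : ℕ) := by
    rw [sum_Icc_choose_mul_choose_sub_two, Nat.cast_sum, mul_sum]
    refine sum_congr rfl fun j hj => ?_
    have hj2 : ((j - 2 : ℕ) : ℝ) = j - 2 := Nat.cast_sub (mem_Ico.1 hj).1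
    simp_rw [← hj2, prod_range_natCast_sub_eq_factorial_mul_choose]
    push_cast
    ring
  -- the vanishing term `j = m + 1` lets the split at `j = 2` below work also for `m = 0`
  have sum_extend : ∑ j ∈ range (m + 1), (m.choose j : ℝ) * ∏ i ∈ range n, ((j : ℝ) - 2 - i) =
      ∑ j ∈ range (m + 2), (m.choose j : ℝ) * ∏ i ∈ range n, ((j : ℝ) - 2 - i) := by
    rw [sum_range_succ _ (m + 1), choose_succ_self, Nat.cast_zero, zero_mul, add_zero]
  rw [sum_extend, ← sum_range_add_sum_Ico _ (by omega : 2 ≤ m + 2), sum_from_two,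
    sum_range_succ, sum_range_one, prod_at_zero, prod_at_one, choose_zero_right, choose_one_right]
  push_cast
  ring

theorem stmt_7 (n m : ℕ) :
    ((∑ k ∈ Finset.Icc (n + 2) m, m.choose k * (k - 2).choose n : ℕ) : ℝ) =
      (1 / (n.factorial : ℝ)) *
          iteratedDeriv n (fun x : ℝ => (x + 2) ^ m / (x + 1) ^ 2) 0 -
        (-1) ^ n * ((m : ℝ) + (n : ℝ) + 1) := by
  rw [iteratedDeriv_add_two_pow_div_add_one_sq, sum_choose_mul_prod_natCast_sub_two_sub, one_div,
    inv_mul_cancel_left₀ (by positivity), add_sub_cancel_right]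
end

section
/- Let R be a nontrivial commutative ring that is a ℂ-algebra, let c ∈ ℂ, and let N ∈ R be nilpotent. Then algebraMap ℂ R (exp_ℂ(2πi·c)) · exp((2πi)·N) = 1 in R if and only if c is an integer (there exists k ∈ ℤ with c = k) and N = 0. (This is the appendix theorem identifying the kernel of the even exponential map exp: O_{M,0} → O*_{M,0} with the locally constant ℤ-valued functions: for f_0 = f_∅ + N with f_∅ the reduced part and N the nilpotent part, exp(2πi f_0) = 1 forces f_∅ ∈ ℤ and N = 0.) -/
/-- The exponential of a nilpotent element of a `ℂ`-algebra: the finite sum `∑ x^k/k!`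
truncated at the nilpotency class of `x` (this is Mathlib's `IsNilpotent.exp`). -/
noncomputable def nilpExp {R : Type*} [Ring R] [Algebra ℂ R] (x : R) : R :=
  ∑ i ∈ Finset.range (nilpotencyClass x), ((i.factorial : ℂ)⁻¹) • x ^ i

/-!
Write `e = exp(2πi c)` and `M = 2πi N`. Since `M` is nilpotent, `nilpExp M = 1 + M u` with `u` a
unit, so `algebraMap e * nilpExp M = 1` makes `algebraMap e - 1 = -(algebraMap e) M u` nilpotent.
The structure map of the field `ℂ` into a nontrivial ring is injective and `ℂ` is reduced, hence
`e = 1`, i.e. `c ∈ ℤ`. Then `nilpExp M = 1`, i.e. `M u = 0`, so `M = 0` and `N = 0`.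
-/

open Finset

lemma nilpExp_zero {R : Type*} [Ring R] [Nontrivial R] [Algebra ℂ R] : nilpExp (0 : R) = 1 := by
  simp [nilpExp]

section nilpExp

variable {R : Type*} [CommRing R] [Nontrivial R] [Algebra ℂ R]

lemma exists_isUnit_nilpExp_sub_one_eq_mul {x : R} (hx : IsNilpotent x) :
    ∃ u : R, IsUnit u ∧ nilpExp x - 1 = x * u := by
  obtain ⟨n, hn⟩ : ∃ n, nilpotencyClass x = n + 1 :=
    Nat.exists_eq_succ_of_ne_zero (pos_nilpotencyClass_iff.mpr hx).ne'
  have hxn : x ^ (n + 1) = 0 := hn ▸ pow_nilpotencyClass hx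
  refine ⟨∑ i ∈ range (n + 1), (((i + 1).factorial : ℂ)⁻¹) • x ^ i, ?_, ?_⟩
  · rw [sum_range_succ', add_comm]
    simp only [pow_zero, zero_add, Nat.factorial_one, Nat.cast_one, inv_one, one_smul]
    exact IsNilpotent.isUnit_one_add (isNilpotent_sum fun i _ => (hx.pow_succ i).smul _)
  · rw [nilpExp, hn, sum_range_succ', mul_sum, sum_range_succ, mul_smul_comm, ← pow_succ', hxn]
    simp only [pow_zero, Nat.factorial_zero, Nat.cast_one, inv_one, one_smul, add_sub_cancel_right,
      smul_zero, add_zero]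
    exact sum_congr rfl fun i _ => by rw [mul_smul_comm, pow_succ']

lemma nilpExp_eq_one_iff {x : R} (hx : IsNilpotent x) : nilpExp x = 1 ↔ x = 0 := by
  refine ⟨fun h => ?_, fun h => h ▸ nilpExp_zero⟩
  obtain ⟨u, hu, hxu⟩ := exists_isUnit_nilpExp_sub_one_eq_mul hx
  rw [h, sub_self, eq_comm] at hxu
  exact hu.mul_left_eq_zero.mp hxu

lemma isNilpotent_nilpExp_sub_one {x : R} (hx : IsNilpotent x) : IsNilpotent (nilpExp x - 1) := by
  obtain ⟨u, -, hxu⟩ := exists_isUnit_nilpExp_sub_one_eq_mul hx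
  exact hxu ▸ (Commute.all _ _).isNilpotent_mul_right hx

end nilpExp

lemma isNilpotent_sub_one_of_mul_eq_one {R : Type*} [CommRing R] {a b : R} (hab : a * b = 1)
    (hb : IsNilpotent (b - 1)) : IsNilpotent (a - 1) := by
  have hsub : a - 1 = -(a * (b - 1)) := by linear_combination hab
  exact hsub ▸ ((Commute.all _ _).isNilpotent_mul_left hb).neg

lemma eq_one_of_isNilpotent_algebraMap_sub_one {K R : Type*} [Field K] [Ring R] [Nontrivial R]
    [Algebra K R] {z : K} (h : IsNilpotent (algebraMap K R z - 1)) : z = 1 := by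
  rw [← map_one (algebraMap K R), ← map_sub, IsNilpotent.map_iff (algebraMap K R).injective] at h
  exact sub_eq_zero.mp h.eq_zero

lemma Complex.exp_two_pi_I_mul_eq_one_iff {c : ℂ} :
    Complex.exp (2 * Real.pi * Complex.I * c) = 1 ↔ ∃ k : ℤ, c = k := by
  simp only [Complex.exp_eq_one_iff, mul_comm _ (2 * (Real.pi : ℂ) * Complex.I),
    mul_right_inj' Complex.two_pi_I_ne_zero]

theorem stmt_16 {R : Type*} [CommRing R] [Nontrivial R] [Algebra ℂ R]
    (c : ℂ) (N : R) (hN : IsNilpotent N) :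
    algebraMap ℂ R (Complex.exp (2 * (Real.pi : ℂ) * Complex.I * c)) *
        nilpExp ((2 * (Real.pi : ℂ) * Complex.I) • N) = 1 ↔
      (∃ k : ℤ, c = (k : ℂ)) ∧ N = 0 := by
  have hM : IsNilpotent ((2 * (Real.pi : ℂ) * Complex.I) • N) := hN.smul _
  rw [← Complex.exp_two_pi_I_mul_eq_one_iff]
  constructor
  · intro h
    have he : Complex.exp (2 * Real.pi * Complex.I * c) = 1 :=
      eq_one_of_isNilpotent_algebraMap_sub_one <|
        isNilpotent_sub_one_of_mul_eq_one h (isNilpotent_nilpExp_sub_one hM)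
    rw [he, map_one, one_mul, nilpExp_eq_one_iff hM, smul_eq_zero] at h
    exact ⟨he, h.resolve_left Complex.two_pi_I_ne_zero⟩
  · rintro ⟨he, rfl⟩
    rw [he, map_one, smul_zero, nilpExp_zero, mul_one]
end
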